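/- arXiv:1705.04466 — 3 statements merged into one kernel-verified Lean document; each statement's English description precedes it below -/
import Mathlib

section
/- Let (X,d) be a complete separable metric space and m a nonnegative Borel measure on X which is finite on bounded sets. Fix p ∈ [1,∞) and constants C, L ≥ 0, and for every s ∈ (0,1] let F_s : X → X be a Borel map such that (F_s)_*m ≤ C·m and such that for m-almost every x ∈ X one has d(F_s(x), x) ≤ L·s. If (f_s)_{s∈(0,1]} ⊆ L^p(X,m) and f ∈ L^p(X,m) satisfy f_s → f in L^p(X,m) as s → 0, then also f_s ∘ F_s → f in L^p(X,m) as s → 0. -/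
open MeasureTheory Metric Bornology Filter Function Set
open scoped ENNReal NNReal Topology

/-!
Lipschitz functions with support of finite measure are dense in `L^p` for `p < ∞`: a set of finite
measure contains a closed bounded set `K` of almost full measure, and `thickenedIndicator δ K`
is a Lipschitz function differing from the indicator of `K` only on `thickening δ K \ K`, whose
measure tends to `0` with `δ`. For Lipschitz `h` with constant `Λ`, `|h ∘ F_s - h| ≤ Λ L s` and it
vanishes off `supp h ∪ F_s⁻¹(supp h)`, a set of measure at most `(1 + C) m(supp h)`; so
`h ∘ F_s → h` in `L^p`. Composition with `F_s` has norm at most `C^(1/p)` on `L^p`, uniformly in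
`s`, which carries this over to every `g ∈ L^p`, and then
`f_s ∘ F_s - g = (f_s - g) ∘ F_s + (g ∘ F_s - g)` concludes.
-/

theorem ENNReal.tendsto_nhds_zero_of_forall_eventually_le_mul {ι : Type*} {l : Filter ι}
    {f : ι → ℝ≥0∞} {A : ℝ≥0∞} (hA : A ≠ ∞) (h : ∀ η > 0, ∀ᶠ i in l, f i ≤ A * η) :
    Tendsto f l (𝓝 0) := by
  rw [ENNReal.tendsto_nhds_zero]
  intro ε hε
  filter_upwards [h (ε / A) (ENNReal.div_pos hε.ne' hA)] with i hi
  exact hi.trans ENNReal.mul_div_le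

section Composition

variable {α β E : Type*} [MeasurableSpace α] [MeasurableSpace β] [NormedAddCommGroup E]
  {μ : Measure α} {ν : Measure β} {T : α → β} {C p : ℝ≥0∞} {u : β → E}

theorem MeasureTheory.AEStronglyMeasurable.comp_of_map_le_smul (hu : AEStronglyMeasurable u ν)
    (hT : AEMeasurable T μ) (hmap : μ.map T ≤ C • ν) : AEStronglyMeasurable (u ∘ T) μ :=
  (hu.mono_ac (Measure.absolutelyContinuous_of_le_smul hmap)).comp_aemeasurable hT

theorem eLpNorm_comp_le_of_map_le_smul (hp : p ≠ ∞) (hT : AEMeasurable T μ)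
    (hmap : μ.map T ≤ C • ν) (hu : AEStronglyMeasurable u ν) :
    eLpNorm (u ∘ T) p μ ≤ C ^ (1 / p).toReal * eLpNorm u p ν :=
  calc eLpNorm (u ∘ T) p μ = eLpNorm u p (μ.map T) :=
        (eLpNorm_map_measure (hu.mono_ac (Measure.absolutelyContinuous_of_le_smul hmap)) hT).symm
    _ ≤ eLpNorm u p (C • ν) := eLpNorm_mono_measure u hmap
    _ = C ^ (1 / p).toReal * eLpNorm u p ν := by
        rw [eLpNorm_smul_measure_of_ne_top hp, smul_eq_mul]

theorem eLpNorm_comp_sub_le_of_map_le_smul {T : α → α} {u : α → E} (hp1 : 1 ≤ p) (hp : p ≠ ∞)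
    (hT : AEMeasurable T μ) (hmap : μ.map T ≤ C • μ) (hu : AEStronglyMeasurable u μ) :
    eLpNorm (u ∘ T - u) p μ ≤ (C ^ (1 / p).toReal + 1) * eLpNorm u p μ :=
  calc eLpNorm (u ∘ T - u) p μ ≤ eLpNorm (u ∘ T) p μ + eLpNorm u p μ :=
        eLpNorm_sub_le (hu.comp_of_map_le_smul hT hmap) hu hp1
    _ ≤ C ^ (1 / p).toReal * eLpNorm u p μ + eLpNorm u p μ := by
        gcongr; exact eLpNorm_comp_le_of_map_le_smul hp hT hmap hu
    _ = (C ^ (1 / p).toReal + 1) * eLpNorm u p μ := by ring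

end Composition

theorem LipschitzWith.eLpNorm_comp_sub_le {X E : Type*} [PseudoMetricSpace X] [MeasurableSpace X]
    [OpensMeasurableSpace X] [NormedAddCommGroup E] {μ : Measure X} {C : ℝ≥0∞} {K : ℝ≥0}
    {h : X → E} (hh : LipschitzWith K h) {T : X → X} (hT : AEMeasurable T μ)
    (hmap : μ.map T ≤ C • μ) {r : ℝ} (hdist : ∀ᵐ x ∂μ, dist (T x) x ≤ r) (p : ℝ≥0∞) :
    eLpNorm (h ∘ T - h) p μ ≤ ‖(K : ℝ) * r‖ₑ * ((1 + C) * μ (support h)) ^ (1 / p.toReal) := by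
  set A := support h ∪ T ⁻¹' support h
  have hS : MeasurableSet (support h) := hh.continuous.isOpen_support.measurableSet
  have hA : μ A ≤ (1 + C) * μ (support h) :=
    calc μ A ≤ μ (support h) + μ (T ⁻¹' support h) := measure_union_le _ _
      _ = μ (support h) + μ.map T (support h) := by rw [Measure.map_apply_of_aemeasurable hT hS]
      _ ≤ μ (support h) + C * μ (support h) := by gcongr; exact hmap _
      _ = (1 + C) * μ (support h) := by ring
  have hpt : ∀ᵐ x ∂μ, ‖(h ∘ T - h) x‖ ≤ ‖A.indicator (fun _ => (K : ℝ) * r) x‖ := by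
    filter_upwards [hdist] with x hx
    by_cases hxA : x ∈ A
    · rw [indicator_of_mem hxA, Pi.sub_apply, comp_apply, ← dist_eq_norm]
      calc dist (h (T x)) (h x) ≤ K * dist (T x) x := hh.dist_le_mul _ _
        _ ≤ K * r := by gcongr
        _ ≤ ‖(K : ℝ) * r‖ := Real.le_norm_self _
    · obtain ⟨hx0, hTx0⟩ : h x = 0 ∧ h (T x) = 0 := by
        simpa [A, not_or] using hxA
      simp [hx0, hTx0]
  calc eLpNorm (h ∘ T - h) p μ ≤ eLpNorm (A.indicator fun _ => (K : ℝ) * r) p μ :=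
        eLpNorm_mono_ae hpt
    _ ≤ ‖(K : ℝ) * r‖ₑ * μ A ^ (1 / p.toReal) := eLpNorm_indicator_const_le _ _
    _ ≤ ‖(K : ℝ) * r‖ₑ * ((1 + C) * μ (support h)) ^ (1 / p.toReal) := by gcongr

section Density

variable {X E : Type*} [MetricSpace X] [NormedAddCommGroup E] [NormedSpace ℝ E]

theorem norm_thickenedIndicator_smul_sub_indicator_le {F s : Set X} (hFs : F ⊆ s) {δ : ℝ}
    (hδ : 0 < δ) (c : E) (x : X) :
    ‖(thickenedIndicator hδ F x : ℝ) • c - s.indicator (fun _ => c) x‖ ≤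
      ((thickening δ F \ F) ∪ (s \ F)).indicator (fun _ => ‖c‖) x := by
  set t : ℝ := ↑(thickenedIndicator hδ F x)
  have ht0 : 0 ≤ t := NNReal.coe_nonneg _
  have ht1 : t ≤ 1 := by exact_mod_cast thickenedIndicator_le_one hδ F x
  by_cases hxF : x ∈ F
  · simpa [t, thickenedIndicator_one hδ F hxF, hFs hxF] using
      indicator_nonneg (fun _ _ => norm_nonneg c) x
  by_cases hxs : x ∈ s
  · have hsub : t • c - c = (t - 1) • c := by rw [sub_smul, one_smul]
    rw [indicator_of_mem (mem_union_right _ (mem_sdiff_of_mem hxs hxF)), indicator_of_mem hxs,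
      hsub, norm_smul]
    exact mul_le_of_le_one_left (norm_nonneg c)
      (by rw [Real.norm_eq_abs, abs_le]; constructor <;> linarith)
  by_cases hxT : x ∈ thickening δ F
  · rw [indicator_of_mem (mem_union_left _ (mem_sdiff_of_mem hxT hxF)), indicator_of_notMem hxs,
      sub_zero, norm_smul, Real.norm_of_nonneg ht0]
    exact mul_le_of_le_one_left (norm_nonneg c) ht1
  · have hx : x ∉ (thickening δ F \ F) ∪ (s \ F) := by simp [hxT, hxs]
    simp [t, indicator_of_notMem hx, indicator_of_notMem hxs, thickenedIndicator_zero hδ F hxT]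

variable [MeasurableSpace X] {μ : Measure X}

theorem MeasurableSet.exists_isClosed_isBounded_sdiff_lt [OpensMeasurableSpace X]
    [μ.WeaklyRegular] {s : Set X} (hs : MeasurableSet s) (hμs : μ s ≠ ∞) {ε : ℝ≥0∞}
    (hε : ε ≠ 0) : ∃ F ⊆ s, IsClosed F ∧ IsBounded F ∧ μ (s \ F) < ε := by
  rcases s.eq_empty_or_nonempty with rfl | ⟨x₀, -⟩
  · exact ⟨∅, subset_rfl, isClosed_empty, isBounded_empty, by simpa using pos_iff_ne_zero.2 hε⟩
  have hlim : Tendsto (fun n : ℕ => μ (s \ closedBall x₀ n)) atTop (𝓝 0) := by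
    have := tendsto_measure_iInter_atTop (μ := μ) (s := fun n : ℕ => s \ closedBall x₀ n)
      (fun n => (hs.diff measurableSet_closedBall).nullMeasurableSet)
      (fun i j hij =>
        sdiff_subset_sdiff_right (closedBall_subset_closedBall (by exact_mod_cast hij)))
      ⟨0, ne_top_of_le_ne_top hμs (measure_mono sdiff_subset)⟩
    rwa [← sdiff_iUnion, iUnion_closedBall_nat, sdiff_univ, measure_empty] at this
  obtain ⟨n, hn⟩ := (hlim.eventually (gt_mem_nhds (ENNReal.half_pos hε))).exists
  obtain ⟨F, hFs, hFc, hF⟩ := (hs.inter measurableSet_closedBall).exists_isClosed_sdiff_lt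
    (ne_top_of_le_ne_top hμs (measure_mono inter_subset_left)) (ENNReal.half_pos hε).ne'
  refine ⟨F, hFs.trans inter_subset_left, hFc,
    isBounded_closedBall.subset (hFs.trans inter_subset_right), ?_⟩
  have hcover : s \ F ⊆ (s \ closedBall x₀ n) ∪ ((s ∩ closedBall x₀ n) \ F) := by
    rintro x ⟨hxs, hxF⟩
    by_cases hxB : x ∈ closedBall x₀ n
    · exact Or.inr ⟨⟨hxs, hxB⟩, hxF⟩
    · exact Or.inl ⟨hxs, hxB⟩
  calc μ (s \ F) ≤ μ (s \ closedBall x₀ n) + μ ((s ∩ closedBall x₀ n) \ F) :=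
        (measure_mono hcover).trans (measure_union_le _ _)
    _ < ε / 2 + ε / 2 := ENNReal.add_lt_add hn hF
    _ = ε := ENNReal.add_halves ε

theorem IsClosed.exists_measure_thickening_sdiff_lt [OpensMeasurableSpace X] {F : Set X}
    (hF : IsClosed F) (hfin : ∃ R > 0, μ (thickening R F) ≠ ∞) {ε : ℝ≥0∞} (hε : ε ≠ 0) :
    ∃ δ > 0, μ (thickening δ F \ F) < ε := by
  obtain ⟨R, hR, hRfin⟩ := hfin
  have hFfin : μ F ≠ ∞ := ne_top_of_le_ne_top hRfin (measure_mono (self_subset_thickening hR F))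
  obtain ⟨δ, hδ, hδpos⟩ := (((tendsto_measure_thickening_of_isClosed ⟨R, hR, hRfin⟩ hF).eventually
    (gt_mem_nhds (ENNReal.lt_add_right hFfin hε))).and self_mem_nhdsWithin).exists
  exact ⟨δ, hδpos,
    measure_sdiff_lt_of_lt_add hF.nullMeasurableSet (self_subset_thickening hδpos F) hFfin hδ⟩

theorem exists_lipschitzWith_eLpNorm_sub_indicator_le [OpensMeasurableSpace X] [μ.WeaklyRegular]
    (hμ : ∀ s : Set X, IsBounded s → μ s < ∞) {p : ℝ≥0∞} (hp0 : p ≠ 0) (hp : p ≠ ∞) (c : E)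
    {s : Set X} (hs : MeasurableSet s) (hμs : μ s < ∞) {ε : ℝ≥0∞} (hε : ε ≠ 0) :
    ∃ h : X → E, eLpNorm (h - s.indicator fun _ => c) p μ ≤ ε ∧
      (∃ K, LipschitzWith K h) ∧ μ (support h) < ∞ := by
  have hτ : 0 < 1 / p.toReal := one_div_pos.2 (ENNReal.toReal_pos hp0 hp)
  have hlim : Tendsto (fun a : ℝ≥0∞ => ‖c‖ₑ * a ^ (1 / p.toReal)) (𝓝 0) (𝓝 0) := by
    have := ENNReal.Tendsto.const_mul
      ((ENNReal.continuous_rpow_const (y := 1 / p.toReal)).tendsto 0)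
      (Or.inr (enorm_ne_top (x := c)))
    rwa [ENNReal.zero_rpow_of_pos hτ, mul_zero] at this
  obtain ⟨η, hη, hηε⟩ := ENNReal.nhds_zero_basis.eventually_iff.1
    (hlim.eventually (eventually_le_nhds (pos_iff_ne_zero.2 hε)))
  obtain ⟨F, hFs, hFc, hFb, hsF⟩ :=
    hs.exists_isClosed_isBounded_sdiff_lt hμs.ne (ENNReal.half_pos hη.ne').ne'
  obtain ⟨δ, hδ, hFδ⟩ := hFc.exists_measure_thickening_sdiff_lt
    ⟨1, one_pos, (hμ _ hFb.thickening).ne⟩ (ENNReal.half_pos hη.ne').ne'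
  have hbad : μ ((thickening δ F \ F) ∪ (s \ F)) < η :=
    calc μ ((thickening δ F \ F) ∪ (s \ F)) ≤ μ (thickening δ F \ F) + μ (s \ F) :=
          measure_union_le _ _
      _ < η / 2 + η / 2 := ENNReal.add_lt_add hFδ hsF
      _ = η := ENNReal.add_halves η
  have hsupp : support (fun x => (thickenedIndicator hδ F x : ℝ) • c) ⊆ thickening δ F :=
    fun x hx => by_contra fun hxT => hx (by simp [thickenedIndicator_zero hδ F hxT])
  have hlip := (ContinuousLinearMap.toSpanSingleton ℝ c).lipschitz.comp
    ((LipschitzWith.subtype_val _).comp (lipschitzWith_thickenedIndicator hδ F))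
  refine ⟨fun x => (thickenedIndicator hδ F x : ℝ) • c, ?_, ⟨_, hlip⟩,
    (measure_mono hsupp).trans_lt (hμ _ hFb.thickening)⟩
  calc eLpNorm _ p μ ≤ eLpNorm (((thickening δ F \ F) ∪ (s \ F)).indicator fun _ => ‖c‖) p μ :=
        eLpNorm_mono_real fun x => norm_thickenedIndicator_smul_sub_indicator_le hFs hδ c x
    _ ≤ ‖c‖ₑ * μ ((thickening δ F \ F) ∪ (s \ F)) ^ (1 / p.toReal) :=
        (eLpNorm_indicator_const_le _ _).trans_eq (by rw [enorm_norm])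
    _ ≤ ε := hηε hbad

theorem MeasureTheory.MemLp.exists_lipschitzWith_eLpNorm_sub_le [TopologicalSpace.SeparableSpace X]
    [BorelSpace X] (hμ : ∀ s : Set X, IsBounded s → μ s < ∞) {p : ℝ≥0∞} (hp0 : p ≠ 0)
    (hp : p ≠ ∞) {g : X → E} (hg : MemLp g p μ) {ε : ℝ≥0∞} (hε : ε ≠ 0) :
    ∃ h : X → E, eLpNorm (g - h) p μ ≤ ε ∧ (∃ K, LipschitzWith K h) ∧ μ (support h) < ∞ := by
  have : SecondCountableTopology X := UniformSpace.secondCountable_of_separable X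
  have : IsLocallyFiniteMeasure μ :=
    ⟨fun x => ⟨ball x 1, ball_mem_nhds x one_pos, hμ _ isBounded_ball⟩⟩
  refine hg.induction_dense hp _
    (fun c s hs hμs ε hε => exists_lipschitzWith_eLpNorm_sub_indicator_le hμ hp0 hp c hs hμs hε)
    ?_ ?_ hε
  · rintro u v ⟨⟨Ku, hu⟩, hμu⟩ ⟨⟨Kv, hv⟩, hμv⟩
    exact ⟨⟨Ku + Kv, hu.add hv⟩, (measure_mono (support_add u v)).trans_lt
      ((measure_union_le _ _).trans_lt (ENNReal.add_lt_top.2 ⟨hμu, hμv⟩))⟩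
  · rintro u ⟨⟨K, hK⟩, -⟩
    exact hK.continuous.aestronglyMeasurable

end Density

section Translation

variable {X E ι : Type*} [MetricSpace X] [TopologicalSpace.SeparableSpace X] [MeasurableSpace X]
  [BorelSpace X] [NormedAddCommGroup E] [NormedSpace ℝ E] {μ : Measure X} {p : ℝ≥0∞} {C : ℝ≥0}
  {l : Filter ι} {T : ι → X → X} {r : ι → ℝ}

theorem MeasureTheory.MemLp.tendsto_eLpNorm_comp_sub (hμ : ∀ s : Set X, IsBounded s → μ s < ∞)
    (hp1 : 1 ≤ p) (hp : p ≠ ∞) (hT : ∀ᶠ i in l, AEMeasurable (T i) μ)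
    (hmap : ∀ᶠ i in l, μ.map (T i) ≤ (C : ℝ≥0∞) • μ)
    (hdist : ∀ᶠ i in l, ∀ᵐ x ∂μ, dist (T i x) x ≤ r i) (hr : Tendsto r l (𝓝 0))
    {g : X → E} (hg : MemLp g p μ) :
    Tendsto (fun i => eLpNorm (g ∘ T i - g) p μ) l (𝓝 0) := by
  set D : ℝ≥0∞ := (C : ℝ≥0∞) ^ (1 / p).toReal + 1
  refine ENNReal.tendsto_nhds_zero_of_forall_eventually_le_mul (A := D + 1) (by finiteness)
    fun η hη => ?_
  obtain ⟨h, hgh, ⟨K, hK⟩, hsupp⟩ :=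
    hg.exists_lipschitzWith_eLpNorm_sub_le hμ (zero_lt_one.trans_le hp1).ne' hp hη.ne'
  have hsmall : Tendsto (fun i => ‖(K : ℝ) * r i‖ₑ *
      ((1 + (C : ℝ≥0∞)) * μ (support h)) ^ (1 / p.toReal)) l (𝓝 0) := by
    have hKr : Tendsto (fun i => ‖(K : ℝ) * r i‖ₑ) l (𝓝 0) := by
      have hKr' : Tendsto (fun i => (K : ℝ) * r i) l (𝓝 0) := by simpa using hr.const_mul (K : ℝ)
      simpa only [comp_def, enorm_zero] using (continuous_enorm.tendsto (0 : ℝ)).comp hKr'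
    simpa using ENNReal.Tendsto.mul_const hKr (Or.inr (by finiteness))
  filter_upwards [hT, hmap, hdist, hsmall.eventually (eventually_le_nhds hη)]
    with i hTi hmapi hdisti hsmalli
  have hu : AEStronglyMeasurable (g - h) μ := hg.1.sub hK.continuous.aestronglyMeasurable
  calc eLpNorm (g ∘ T i - g) p μ = eLpNorm (((g - h) ∘ T i - (g - h)) + (h ∘ T i - h)) p μ := by
        congr 1; ext x; simp only [Pi.add_apply, Pi.sub_apply, comp_apply]; abel
    _ ≤ eLpNorm ((g - h) ∘ T i - (g - h)) p μ + eLpNorm (h ∘ T i - h) p μ :=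
        eLpNorm_add_le ((hu.comp_of_map_le_smul hTi hmapi).sub hu)
          ((hK.continuous.aestronglyMeasurable.comp_of_map_le_smul hTi hmapi).sub
            hK.continuous.aestronglyMeasurable) hp1
    _ ≤ D * η + η := add_le_add
        ((eLpNorm_comp_sub_le_of_map_le_smul hp1 hp hTi hmapi hu).trans (by gcongr))
        ((hK.eLpNorm_comp_sub_le hTi hmapi hdisti p).trans hsmalli)
    _ = (D + 1) * η := by ring

theorem MeasureTheory.MemLp.tendsto_eLpNorm_comp_sub_of_tendsto
    (hμ : ∀ s : Set X, IsBounded s → μ s < ∞) (hp1 : 1 ≤ p) (hp : p ≠ ∞)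
    (hT : ∀ᶠ i in l, AEMeasurable (T i) μ) (hmap : ∀ᶠ i in l, μ.map (T i) ≤ (C : ℝ≥0∞) • μ)
    (hdist : ∀ᶠ i in l, ∀ᵐ x ∂μ, dist (T i x) x ≤ r i) (hr : Tendsto r l (𝓝 0))
    {f : ι → X → E} {g : X → E} (hf : ∀ᶠ i in l, AEStronglyMeasurable (f i) μ)
    (hg : MemLp g p μ) (hfg : Tendsto (fun i => eLpNorm (f i - g) p μ) l (𝓝 0)) :
    Tendsto (fun i => eLpNorm (f i ∘ T i - g) p μ) l (𝓝 0) := by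
  have hbound : Tendsto (fun i => (C : ℝ≥0∞) ^ (1 / p).toReal * eLpNorm (f i - g) p μ +
      eLpNorm (g ∘ T i - g) p μ) l (𝓝 0) := by
    simpa using (ENNReal.Tendsto.const_mul hfg (Or.inr (by finiteness))).add
      (hg.tendsto_eLpNorm_comp_sub hμ hp1 hp hT hmap hdist hr)
  refine tendsto_nhds_bot_mono hbound ?_
  filter_upwards [hf, hT, hmap] with i hfi hTi hmapi
  have hfgi : AEStronglyMeasurable (f i - g) μ := hfi.sub hg.1
  calc eLpNorm (f i ∘ T i - g) p μ = eLpNorm ((f i - g) ∘ T i + (g ∘ T i - g)) p μ := by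
        congr 1; ext x; simp only [Pi.add_apply, Pi.sub_apply, comp_apply]; abel
    _ ≤ eLpNorm ((f i - g) ∘ T i) p μ + eLpNorm (g ∘ T i - g) p μ :=
        eLpNorm_add_le (hfgi.comp_of_map_le_smul hTi hmapi)
          ((hg.1.comp_of_map_le_smul hTi hmapi).sub hg.1) hp1
    _ ≤ (C : ℝ≥0∞) ^ (1 / p).toReal * eLpNorm (f i - g) p μ + eLpNorm (g ∘ T i - g) p μ := by
        gcongr; exact eLpNorm_comp_le_of_map_le_smul hp hTi hmapi hfgi

end Translation

theorem stmt_1_general {X : Type*} [MetricSpace X]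
    [TopologicalSpace.SeparableSpace X] [MeasurableSpace X] [BorelSpace X]
    (m : Measure X) (hm : ∀ s : Set X, IsBounded s → m s < ⊤)
    (p : ℝ≥0∞) (hp1 : 1 ≤ p) (hp2 : p ≠ ⊤)
    (C : ℝ≥0) (L : ℝ)
    (F : ℝ → X → X) (hFmeas : ∀ s ∈ Set.Ioc (0:ℝ) 1, Measurable (F s))
    (hFpush : ∀ s ∈ Set.Ioc (0:ℝ) 1, m.map (F s) ≤ (C : ℝ≥0∞) • m)
    (hFdist : ∀ s ∈ Set.Ioc (0:ℝ) 1, ∀ᵐ x ∂m, dist (F s x) x ≤ L * s)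
    (f : ℝ → X → ℝ) (g : X → ℝ)
    (hf : ∀ s ∈ Set.Ioc (0:ℝ) 1, MemLp (f s) p m) (hg : MemLp g p m)
    (hconv : Tendsto (fun s => eLpNorm (f s - g) p m) (𝓝[Set.Ioc (0:ℝ) 1] 0) (𝓝 0)) :
    Tendsto (fun s => eLpNorm (f s ∘ F s - g) p m) (𝓝[Set.Ioc (0:ℝ) 1] 0) (𝓝 0) := by
  have hr : Tendsto (fun s : ℝ => L * s) (𝓝[Set.Ioc (0:ℝ) 1] 0) (𝓝 0) := by
    simpa using ((continuous_const_mul L).tendsto 0).mono_left nhdsWithin_le_nhds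
  exact hg.tendsto_eLpNorm_comp_sub_of_tendsto hm hp1 hp2
    (eventually_nhdsWithin_of_forall fun s hs => (hFmeas s hs).aemeasurable)
    (eventually_nhdsWithin_of_forall hFpush) (eventually_nhdsWithin_of_forall hFdist) hr
    (eventually_nhdsWithin_of_forall fun s hs => (hf s hs).1) hconv

/-- If `F s` are Borel maps with pushforward bounded by `C • m` which move points by at
most `L * s`, then convergence `f s → f` in `L^p` implies `f s ∘ F s → f` in `L^p`. -/
theorem stmt_1 {X : Type*} [MetricSpace X] [CompleteSpace X]
    [TopologicalSpace.SeparableSpace X] [MeasurableSpace X] [BorelSpace X]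
    (m : Measure X) (hm : ∀ s : Set X, IsBounded s → m s < ⊤)
    (p : ℝ≥0∞) (hp1 : 1 ≤ p) (hp2 : p ≠ ⊤)
    (C : ℝ≥0) (L : ℝ) (hL : 0 ≤ L)
    (F : ℝ → X → X) (hFmeas : ∀ s ∈ Set.Ioc (0:ℝ) 1, Measurable (F s))
    (hFpush : ∀ s ∈ Set.Ioc (0:ℝ) 1, m.map (F s) ≤ (C : ℝ≥0∞) • m)
    (hFdist : ∀ s ∈ Set.Ioc (0:ℝ) 1, ∀ᵐ x ∂m, dist (F s x) x ≤ L * s)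
    (f : ℝ → X → ℝ) (g : X → ℝ)
    (hf : ∀ s ∈ Set.Ioc (0:ℝ) 1, MemLp (f s) p m) (hg : MemLp g p m)
    (hconv : Tendsto (fun s => eLpNorm (f s - g) p m) (𝓝[Set.Ioc (0:ℝ) 1] 0) (𝓝 0)) :
    Tendsto (fun s => eLpNorm (f s ∘ F s - g) p m) (𝓝[Set.Ioc (0:ℝ) 1] 0) (𝓝 0) :=
  stmt_1_general m hm p hp1 hp2 C L F hFmeas hFpush hFdist f g hf hg hconv
end

section
/- Let (X,d) be a metric space, N ≥ 1, and let T : X × ℝ^N → X be an ℝ^N-action such that: (a) for every x ∈ X the map a ↦ T(x,a) is 1-Lipschitz from ℝ^N (with the Euclidean norm) to X; (b) for all x, y ∈ X there exists a ∈ ℝ^N with |a| ≤ d(x,y) and T(x,a) = y. Fix x̄ ∈ X and let G be the stabilizer of x̄. Then for all a, b ∈ ℝ^N one has d(T(x̄,a), T(x̄,b)) = inf_{g ∈ G} |a − b + g|, and moreover this infimum is attained, i.e. there exists g ∈ G with d(T(x̄,a), T(x̄,b)) = |a − b + g|. -/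
/-- For a transitive `ℝ^N`-action by maps which are `1`-Lipschitz in the `ℝ^N` variable
and such that any two points are joined by a vector of length at most their distance,
the distance between two points of the orbit of `x₀` is the minimum of `‖a - b + g‖`
over the stabilizer `G` of `x₀`, and the minimum is attained. -/
theorem stmt_3 {X : Type*} [MetricSpace X] (N : ℕ) (hN : 1 ≤ N)
    (T : X → EuclideanSpace ℝ (Fin N) → X)
    (hT0 : ∀ x, T x 0 = x)
    (hTadd : ∀ (x : X) (a b : EuclideanSpace ℝ (Fin N)), T (T x a) b = T x (a + b))
    (hLip : ∀ x, LipschitzWith 1 (T x))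
    (htrans : ∀ x y : X, ∃ a : EuclideanSpace ℝ (Fin N), ‖a‖ ≤ dist x y ∧ T x a = y)
    (x₀ : X) :
    ∀ a b : EuclideanSpace ℝ (Fin N),
      IsLeast {r : ℝ | ∃ g : EuclideanSpace ℝ (Fin N), T x₀ g = x₀ ∧ r = ‖a - b + g‖}
        (dist (T x₀ a) (T x₀ b)) := by
  intro a b
  constructor
  · -- membership: find c joining T x₀ a to T x₀ b
    obtain ⟨c, hc, hTc⟩ := htrans (T x₀ a) (T x₀ b)
    rw [hTadd] at hTc
    -- g := b - a - c is in the stabilizer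
    refine ⟨b - a - c, ?_, ?_⟩
    · calc T x₀ (b - a - c) = T (T x₀ b) (-a - c) := by rw [hTadd]; congr 1; abel
        _ = T (T x₀ (a + c)) (-a - c) := by rw [hTc]
        _ = T x₀ 0 := by rw [hTadd]; congr 1; abel
        _ = x₀ := hT0 x₀
    · have hle : dist (T x₀ a) (T x₀ b) ≤ ‖c‖ := by
        calc dist (T x₀ a) (T x₀ b) = dist (T (T x₀ a) c) (T (T x₀ a) 0) := by
              rw [hT0, hTadd, hTc, dist_comm]
          _ ≤ ‖c - 0‖ := by
              simpa [dist_eq_norm] using (hLip (T x₀ a)).dist_le_mul c 0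
          _ = ‖c‖ := by simp
      have h2 : a - b + (b - a - c) = -c := by abel
      rw [h2, norm_neg]
      exact le_antisymm hle hc
  · -- lower bound
    rintro r ⟨g, hg, rfl⟩
    have hb : T x₀ b = T x₀ (b - g) := by
      calc T x₀ b = T (T x₀ g) (b - g) := by rw [hTadd]; congr 1; abel
        _ = T x₀ (b - g) := by rw [hg]
    calc dist (T x₀ a) (T x₀ b) = dist (T x₀ a) (T x₀ (b - g)) := by rw [hb]
      _ ≤ ‖a - (b - g)‖ := by
          simpa [dist_eq_norm] using (hLip x₀).dist_le_mul a (b - g)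
      _ = ‖a - b + g‖ := by congr 1; abel
end

section
/- Let (X,d) be a complete separable metric space, N ≥ 1, and let T : X × ℝ^N → X be a continuous ℝ^N-action which is transitive, i.e. for some (equivalently, any) x̄ ∈ X and every x ∈ X there exists a ∈ ℝ^N with T(x̄,a) = x. Suppose there exists a nonzero finite Borel measure m on X such that (T(·,a))_*m = m for every a ∈ ℝ^N. Then the stabilizer G of x̄ spans ℝ^N as a real vector space. -/
/-!
If the stabilizer `G` of `x₀` spanned a proper subspace, a linear functional `f` with `f v = 1`
and `G ⊆ ker f` would descend along the orbit map `a ↦ T x₀ a` to a function `F` on `X`, Borel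
by Suslin's theorem, with `F (T x v) = F x + 1`. Then `T · v` preserves the finite measure `m`,
so it is conservative (Poincaré recurrence), yet it moves every point of a slab `n ≤ F < n + 1`
out of that slab for good; hence every slab is `m`-null and `m = 0`.
-/

open MeasureTheory Set

theorem Submodule.exists_dual_eq_one_of_ne_top {K V : Type*} [Field K] [AddCommGroup V]
    [Module K V] {p : Submodule K V} (hp : p ≠ ⊤) :
    ∃ (f : V →ₗ[K] K) (v : V), f v = 1 ∧ ∀ x ∈ p, f x = 0 := by
  obtain ⟨v, -, hv⟩ := SetLike.exists_of_lt hp.lt_top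
  obtain ⟨f, hfp, hfv⟩ := LinearMap.exists_extend_of_notMem (0 : p →ₗ[K] K) hv 1
  exact ⟨f, v, hfv, fun x hx => congr($hfp ⟨x, hx⟩)⟩

theorem Measurable.exists_measurable_comp_eq_of_surjective {E X β : Type*} [MeasurableSpace E]
    [StandardBorelSpace E] [MeasurableSpace X] [MeasurableSpace.CountablySeparated X]
    [MeasurableSpace β] {φ : E → X} (hφ : Measurable φ) (hsurj : Function.Surjective φ)
    {f : E → β} (hf : Measurable f) (hfiber : ∀ a b, φ a = φ b → f a = f b) :
    ∃ F : X → β, Measurable F ∧ F ∘ φ = f := by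
  have hcomp : (f ∘ Function.surjInv hsurj) ∘ φ = f :=
    funext fun a => hfiber _ _ (Function.surjInv_eq hsurj (φ a))
  exact ⟨_, (hφ.measurable_comp_iff_of_surjective hsurj).1 (hcomp.symm ▸ hf), hcomp⟩

namespace MeasureTheory.Conservative

variable {α : Type*} [MeasurableSpace α] {μ : Measure α} {g : α → α}

theorem eq_zero_of_add_one_le_comp (hg : Conservative g μ) {F : α → ℝ} (hF : Measurable F)
    (hFg : ∀ x, F x + 1 ≤ F (g x)) : μ = 0 := by
  have hiter : ∀ (k : ℕ) x, F x + k ≤ F (g^[k] x) := by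
    intro k
    induction k with
    | zero => simp
    | succ k ih =>
      intro x
      rw [Function.iterate_succ_apply']
      push_cast
      linarith [ih x, hFg (g^[k] x)]
  set slab : ℤ → Set α := fun n => F ⁻¹' Ico (n : ℝ) (n + 1)
  suffices ∀ n, μ (slab n) = 0 by
    rw [← Measure.measure_univ_eq_zero, ← preimage_univ, ← iUnion_Ico_intCast (α := ℝ), preimage_iUnion]
    exact measure_iUnion_null this
  intro n
  by_contra hn
  obtain ⟨x, hx, k, hk, hkx⟩ :=
    hg.exists_mem_iterate_mem (hF measurableSet_Ico).nullMeasurableSet hn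
  have hk1 : (1 : ℝ) ≤ k := by exact_mod_cast Nat.one_le_iff_ne_zero.2 hk
  linarith [hiter k x, hx.1, hkx.2]

end MeasureTheory.Conservative

section Action

variable {X E A : Type*} [AddCommGroup E] [AddCommGroup A] {T : X → E → X}

theorem map_eq_of_orbit_eq (hT0 : ∀ x, T x 0 = x) (hTadd : ∀ x a b, T (T x a) b = T x (a + b))
    {x₀ : X} {f : E →+ A} (hf : ∀ g, T x₀ g = x₀ → f g = 0) {a b : E}
    (hab : T x₀ a = T x₀ b) : f a = f b := by
  have hstab : T x₀ (b + -a) = x₀ := by rw [← hTadd, ← hab, hTadd, add_neg_cancel, hT0]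
  have := hf _ hstab
  rw [map_add, map_neg, add_neg_eq_zero] at this
  exact this.symm

theorem exists_measurable_add_equivariant [MeasurableSpace E] [StandardBorelSpace E]
    [MeasurableSpace X] [MeasurableSpace.CountablySeparated X] [MeasurableSpace A]
    (hT0 : ∀ x, T x 0 = x) (hTadd : ∀ x a b, T (T x a) b = T x (a + b))
    {x₀ : X} (htrans : ∀ x, ∃ a, T x₀ a = x) (hmeas : Measurable (T x₀))
    {f : E →+ A} (hf_meas : Measurable f) (hf : ∀ g, T x₀ g = x₀ → f g = 0) :
    ∃ F : X → A, Measurable F ∧ ∀ x a, F (T x a) = F x + f a := by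
  obtain ⟨F, hF, hFf⟩ := hmeas.exists_measurable_comp_eq_of_surjective htrans hf_meas
    fun a b => map_eq_of_orbit_eq hT0 hTadd hf
  refine ⟨F, hF, fun x a => ?_⟩
  obtain ⟨b, rfl⟩ := htrans x
  rw [hTadd, ← Function.comp_apply (f := F), ← Function.comp_apply (f := F), hFf]
  exact map_add f b a

end Action

theorem stmt_5_general {X : Type*} [MetricSpace X]
    [TopologicalSpace.SeparableSpace X] [MeasurableSpace X] [BorelSpace X]
    (N : ℕ)
    (T : X → EuclideanSpace ℝ (Fin N) → X)
    (hT0 : ∀ x, T x 0 = x)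
    (hTadd : ∀ (x : X) (a b : EuclideanSpace ℝ (Fin N)), T (T x a) b = T x (a + b))
    (hcont : Continuous (fun p : X × EuclideanSpace ℝ (Fin N) => T p.1 p.2))
    (x₀ : X) (htrans : ∀ x : X, ∃ a : EuclideanSpace ℝ (Fin N), T x₀ a = x)
    (m : Measure X) (hm0 : m ≠ 0) [IsFiniteMeasure m]
    (hinv : ∀ a : EuclideanSpace ℝ (Fin N), m.map (fun x => T x a) = m) :
    Submodule.span ℝ {g : EuclideanSpace ℝ (Fin N) | T x₀ g = x₀} = ⊤ := by
  by_contra hspan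
  obtain ⟨f, v, hfv, hfG⟩ := Submodule.exists_dual_eq_one_of_ne_top hspan
  obtain ⟨F, hF, hFT⟩ := exists_measurable_add_equivariant hT0 hTadd htrans
    (hcont.comp (Continuous.prodMk_right x₀)).measurable
    (f := f.toAddMonoidHom) f.continuous_of_finiteDimensional.measurable
    fun g hg => hfG g (Submodule.subset_span hg)
  have hpres : MeasurePreserving (T · v) m m :=
    ⟨(hcont.comp (Continuous.prodMk_left v)).measurable, hinv v⟩
  exact hm0 (hpres.conservative.eq_zero_of_add_one_le_comp hF fun x => by
    simp [hFT, hfv])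

/-- For a continuous transitive `ℝ^N`-action on a complete separable metric space
admitting a nonzero finite invariant Borel measure, the stabilizer of a point spans
`ℝ^N` as a real vector space. -/
theorem stmt_5 {X : Type*} [MetricSpace X] [CompleteSpace X]
    [TopologicalSpace.SeparableSpace X] [MeasurableSpace X] [BorelSpace X]
    (N : ℕ) (hN : 1 ≤ N)
    (T : X → EuclideanSpace ℝ (Fin N) → X)
    (hT0 : ∀ x, T x 0 = x)
    (hTadd : ∀ (x : X) (a b : EuclideanSpace ℝ (Fin N)), T (T x a) b = T x (a + b))
    (hcont : Continuous (fun p : X × EuclideanSpace ℝ (Fin N) => T p.1 p.2))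
    (x₀ : X) (htrans : ∀ x : X, ∃ a : EuclideanSpace ℝ (Fin N), T x₀ a = x)
    (m : Measure X) (hm0 : m ≠ 0) [IsFiniteMeasure m]
    (hinv : ∀ a : EuclideanSpace ℝ (Fin N), m.map (fun x => T x a) = m) :
    Submodule.span ℝ {g : EuclideanSpace ℝ (Fin N) | T x₀ g = x₀} = ⊤ :=
  stmt_5_general N T hT0 hTadd hcont x₀ htrans m hm0 hinv
end
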